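/- Suppose the set D^c = Z^d \ D is finite, with |D^c| = M, and let α ∈ (0,1). Then there exist constants a' > 0 and b' > 0 such that for all k ≥ 1, P_o( l_k(D^c) ≥ (1-α)k ) ≤ a' e^{-b' k^{1/4}}, where l_k(D^c) is the total local time spent in D^c strictly before time k by the simple random walk started at the origin. -/

import Mathlib

open MeasureTheory ProbabilityTheory
open scoped ENNReal

/-- The `j`-th unit step in `ℤ^d`: for `j < d` it is `+e_j`, and for `d ≤ j < 2d` it is
`-e_{j-d}`.  When `j` is uniform on `{0, …, 2d-1}`, this is a uniformly chosen nearest-neighbour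
step. -/
def dirVec (d : ℕ) (j : ℕ) : Fin d → ℤ := fun i =>
  if j < d then (if (i : ℕ) = j then 1 else 0) else (if (i : ℕ) + d = j then -1 else 0)

/-- The simple random walk on `ℤ^d` started at `x`, driven by the seed sequence `u`: at step `n`
it moves by `dirVec d (u n)`.  When the seeds are i.i.d. uniform on `{0, …, 2d-1}`, this is the
discrete-time simple random walk. -/
def srw (d : ℕ) (x : Fin d → ℤ) (u : ℕ → ℕ) : ℕ → Fin d → ℤ
  | 0 => x
  | n + 1 => srw d x u n + dirVec d (u n)

/-- The local time `l_k(z)`: the number of visits to `z` strictly before time `k`. -/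
def locTime (d : ℕ) (x : Fin d → ℤ) (u : ℕ → ℕ) (k : ℕ) (z : Fin d → ℤ) : ℕ :=
  ((Finset.range k).filter (fun j => srw d x u j = z)).card

open Classical in
/-- The product `∏_{z ∈ D} (2d/(2d+1))^{l_k(z)}`, valued in `[0,∞]`; since `l_k(z) = 0` for all
but finitely many `z`, it is the corresponding finite product over the sites of `D` visited
strictly before time `k`. -/
noncomputable def prodD (d : ℕ) (D : Set (Fin d → ℤ)) (x : Fin d → ℤ) (u : ℕ → ℕ)
    (k : ℕ) : ℝ≥0∞ :=
  ∏ z ∈ ((Finset.range k).image (fun j => srw d x u j)).filter (fun z => z ∈ D),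
    (((2 * d : ℕ) : ℝ≥0∞) / ((2 * d + 1 : ℕ) : ℝ≥0∞)) ^ (locTime d x u k z)

open Classical in
/-- The killed random walk associated to the set `D` of dissipative sites, started at `x` and
driven by the seed sequence `w`; `none` is the cemetery state.  From a site not in `D` it moves
by the uniform step `w n % (2d)`; from a site in `D`, with `r = w n % (2d+1)` it is killed if
`r = 2d` and otherwise moves by step `r`.  When the seeds are i.i.d. uniform on
`{0, …, 2d(2d+1) - 1}`, from a site in `D` the walk moves to each neighbour with probability
`1/(2d+1)` and is killed with probability `1/(2d+1)`, and from a site not in `D` it moves to each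
neighbour with probability `1/(2d)`. -/
noncomputable def kwalk (d : ℕ) (D : Set (Fin d → ℤ)) (x : Fin d → ℤ) (w : ℕ → ℕ) :
    ℕ → Option (Fin d → ℤ)
  | 0 => some x
  | n + 1 =>
    match kwalk d D x w n with
    | none => none
    | some y =>
      if y ∈ D then
        (if w n % (2 * d + 1) = 2 * d then none
         else some (y + dirVec d (w n % (2 * d + 1))))
      else some (y + dirVec d (w n % (2 * d)))

/-- The survival time `T̂` of the killed random walk: the step at which it is killed, as an
element of `[0,∞]` (it equals `∞` if the walk is never killed). -/
noncomputable def killTime (d : ℕ) (D : Set (Fin d → ℤ)) (x : Fin d → ℤ) (w : ℕ → ℕ) : ℝ≥0∞ :=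
  sInf {t : ℝ≥0∞ | ∃ k : ℕ, t = (k : ℝ≥0∞) ∧ kwalk d D x w k = none}

/-- The hitting (return) time `τ(D) = inf {k ≥ 1 : X_k ∈ D}` of the set `D` by the simple random
walk, as an element of `[0,∞]` (it equals `∞` if `D` is never hit at a positive time). -/
noncomputable def retTime (d : ℕ) (D : Set (Fin d → ℤ)) (x : Fin d → ℤ) (u : ℕ → ℕ) : ℝ≥0∞ :=
  sInf {t : ℝ≥0∞ | ∃ k : ℕ, t = (k : ℝ≥0∞) ∧ 1 ≤ k ∧ srw d x u k ∈ D}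

/-!
Let `V y = G (y 0)`, where `G : ℤ → ℝ` takes values in `[1/2, 1]`, is uniformly concave on a
slab `|y 0| ≤ R` containing `Dᶜ` and only slightly convex outside it. For suitable `θ, η > 0`
with `2η ≤ θ(1-α)`, the process `exp (θ l_k(Dᶜ) - η k) V(X_k)` is then a supermartingale: inside
the slab the concavity of `G` pays for the reward `θ`. Hence `E[exp (θ l_k(Dᶜ))] ≤ 2 e^{ηk}`,
and the exponential Chebyshev inequality gives `P(l_k(Dᶜ) ≥ (1-α)k) ≤ 2 e^{-ηk}`. Expectations
are averages over the `(2d)^k` seed vectors of the first `k` steps.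
-/

open Finset

section SeedVectors

variable {d n k : ℕ}

def extendSeeds (v : Fin k → Fin n) : ℕ → ℕ :=
  fun m => if h : m < k then v ⟨m, h⟩ else 0

open Classical in
/-- The local time `l_k(A)` of the paper. -/
noncomputable def occupationTime (d : ℕ) (x : Fin d → ℤ) (u : ℕ → ℕ) (k : ℕ)
    (A : Set (Fin d → ℤ)) : ℕ :=
  #{j ∈ range k | srw d x u j ∈ A}

theorem srw_congr (x : Fin d → ℤ) {u u' : ℕ → ℕ} :
    ∀ j : ℕ, (∀ m < j, u m = u' m) → srw d x u j = srw d x u' j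
  | 0, _ => rfl
  | j + 1, h => by
    rw [srw, srw, srw_congr x j fun m hm => h m (Nat.lt_succ_of_lt hm), h j j.lt_succ_self]

theorem extendSeeds_snoc_of_lt (v : Fin k → Fin n) (b : Fin n) {m : ℕ} (hm : m < k) :
    extendSeeds (Fin.snoc v b : Fin (k + 1) → Fin n) m = extendSeeds v m := by
  simp only [extendSeeds, dif_pos hm, dif_pos (Nat.lt_succ_of_lt hm)]
  exact congrArg _ (Fin.snoc_castSucc (i := ⟨m, hm⟩) ..)

theorem extendSeeds_snoc_self (v : Fin k → Fin n) (b : Fin n) :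
    extendSeeds (Fin.snoc v b : Fin (k + 1) → Fin n) k = b := by
  simp only [extendSeeds, dif_pos k.lt_succ_self]
  exact congrArg _ (Fin.snoc_last (n := k) ..)

theorem srw_extendSeeds_snoc (x : Fin d → ℤ) (v : Fin k → Fin n) (b : Fin n) {j : ℕ}
    (hj : j ≤ k) :
    srw d x (extendSeeds (Fin.snoc v b : Fin (k + 1) → Fin n)) j = srw d x (extendSeeds v) j :=
  srw_congr x j fun _ hm => extendSeeds_snoc_of_lt v b (hm.trans_le hj)

theorem srw_extendSeeds_snoc_succ (x : Fin d → ℤ) (v : Fin k → Fin n) (b : Fin n) :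
    srw d x (extendSeeds (Fin.snoc v b : Fin (k + 1) → Fin n)) (k + 1) =
      srw d x (extendSeeds v) k + dirVec d b := by
  rw [srw, srw_extendSeeds_snoc x v b le_rfl, extendSeeds_snoc_self]

open Classical in
theorem occupationTime_extendSeeds_restrict (x : Fin d → ℤ) (u : ℕ → Fin n)
    (A : Set (Fin d → ℤ)) :
    occupationTime d x (extendSeeds fun i : Fin k => u i) k A =
      occupationTime d x (fun m => u m) k A := by
  unfold occupationTime
  congr 1
  refine filter_congr fun j hj => ?_
  rw [srw_congr x j fun m hm => ?_]
  simp [extendSeeds, hm.trans (mem_range.1 hj)]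

theorem setOf_le_occupationTime_eq {Ω : Type*} (U : ℕ → Ω → Fin n) (x : Fin d → ℤ)
    (A : Set (Fin d → ℤ)) (a : ℝ) :
    {ω | a ≤ (occupationTime d x (fun m => U m ω) k A : ℝ)} =
      {ω | (fun i : Fin k => U i ω) ∈
        ({v | a ≤ occupationTime d x (extendSeeds v) k A} : Finset (Fin k → Fin n))} := by
  ext ω
  rw [Set.mem_ofPred_eq, Set.mem_ofPred_eq, mem_filter_univ,
    occupationTime_extendSeeds_restrict x (fun m => U m ω)]

theorem sum_indicator_srw_eq_mul_occupationTime (x : Fin d → ℤ) (u : ℕ → ℕ)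
    (A : Set (Fin d → ℤ)) (θ : ℝ) :
    ∑ j ∈ range k, A.indicator (fun _ => θ) (srw d x u j) = θ * occupationTime d x u k A := by
  classical
  simp only [Set.indicator_apply, ← sum_filter, sum_const, nsmul_eq_mul, occupationTime]
  ring

/-- Feynman–Kac bound for a supersolution `V` of the one-step equation with potential `φ`. -/
theorem sum_exp_potential_mul_le (x : Fin d → ℤ) (φ V : (Fin d → ℤ) → ℝ) {c : ℝ} (hc : 0 ≤ c)
    (hstep : ∀ y, Real.exp (φ y) * ∑ b : Fin n, V (y + dirVec d b) ≤ c * V y) (k : ℕ) :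
    ∑ v : Fin k → Fin n, Real.exp (∑ j ∈ range k, φ (srw d x (extendSeeds v) j)) *
      V (srw d x (extendSeeds v) k) ≤ c ^ k * V x := by
  induction k with
  | zero => simp [srw]
  | succ k ih =>
    rw [← (Fin.snocEquiv fun _ => Fin n).sum_comp, Fintype.sum_prod_type, sum_comm]
    calc _ = ∑ v : Fin k → Fin n, Real.exp (∑ j ∈ range k, φ (srw d x (extendSeeds v) j)) *
            (Real.exp (φ (srw d x (extendSeeds v) k)) *
              ∑ b : Fin n, V (srw d x (extendSeeds v) k + dirVec d b)) := by
          refine sum_congr rfl fun v _ => ?_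
          simp only [mul_sum]
          refine sum_congr rfl fun b _ => ?_
          change Real.exp (∑ j ∈ range (k + 1),
            φ (srw d x (extendSeeds (Fin.snoc v b : Fin (k + 1) → Fin n)) j)) *
            V (srw d x (extendSeeds (Fin.snoc v b : Fin (k + 1) → Fin n)) (k + 1)) = _
          rw [sum_range_succ, sum_congr rfl fun j hj =>
              congrArg φ (srw_extendSeeds_snoc x v b (mem_range.1 hj).le),
            srw_extendSeeds_snoc x v b le_rfl, srw_extendSeeds_snoc_succ, Real.exp_add]
          ring
      _ ≤ ∑ v : Fin k → Fin n, Real.exp (∑ j ∈ range k, φ (srw d x (extendSeeds v) j)) *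
            (c * V (srw d x (extendSeeds v) k)) :=
          sum_le_sum fun v _ => mul_le_mul_of_nonneg_left (hstep _) (Real.exp_pos _).le
      _ = c * ∑ v : Fin k → Fin n, Real.exp (∑ j ∈ range k, φ (srw d x (extendSeeds v) j)) *
            V (srw d x (extendSeeds v) k) := by
          rw [mul_sum]; exact sum_congr rfl fun _ _ => by ring
      _ ≤ c * (c ^ k * V x) := mul_le_mul_of_nonneg_left ih hc
      _ = c ^ (k + 1) * V x := by ring

end SeedVectors

theorem card_le_of_occupationTime_ge {d n : ℕ} (hn : 0 < n) (x : Fin d → ℤ)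
    (A : Set (Fin d → ℤ)) (V : (Fin d → ℤ) → ℝ) {θ η : ℝ} (hθ : 0 ≤ θ) (hV : ∀ y, 1 / 2 ≤ V y)
    (hVx : V x ≤ 1)
    (hstep : ∀ y, Real.exp (A.indicator (fun _ => θ) y) * ∑ b : Fin n, V (y + dirVec d b) ≤
      n * Real.exp η * V y)
    (k : ℕ) (a : ℝ) :
    (#{v : Fin k → Fin n | a ≤ occupationTime d x (extendSeeds v) k A} : ℝ) / n ^ k ≤
      2 * Real.exp (η * k - θ * a) := by
  set B := ({v : Fin k → Fin n | a ≤ occupationTime d x (extendSeeds v) k A} : Finset _)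
  set W : (Fin k → Fin n) → ℝ := fun v =>
    Real.exp (θ * occupationTime d x (extendSeeds v) k A) * V (srw d x (extendSeeds v) k)
  have hW : ∀ v ∈ B, Real.exp (θ * a) / 2 ≤ W v := fun v hv => by
    have hexp := Real.exp_le_exp.2 (mul_le_mul_of_nonneg_left (mem_filter.1 hv).2 hθ)
    have hVk := hV (srw d x (extendSeeds v) k)
    simp only [W]
    nlinarith [Real.exp_pos (θ * a)]
  have hsum : ∑ v, W v ≤ (n * Real.exp η) ^ k := by
    have hFK := sum_exp_potential_mul_le x _ V (by positivity) hstep k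
    simp only [sum_indicator_srw_eq_mul_occupationTime] at hFK
    exact hFK.trans (mul_le_of_le_one_right (by positivity) hVx)
  have hB : B.card • (Real.exp (θ * a) / 2) ≤ (n * Real.exp η) ^ k :=
    (card_nsmul_le_sum B W _ hW).trans <| (sum_le_sum_of_subset_of_nonneg (subset_univ B)
      fun v _ _ => by positivity [hV (srw d x (extendSeeds v) k)]).trans hsum
  rw [nsmul_eq_mul, mul_pow, ← Real.exp_nat_mul] at hB
  rw [div_le_iff₀ (by positivity), Real.exp_sub, mul_comm η]
  field_simp
  linarith

theorem measure_seeds_mem {Ω : Type*} [MeasurableSpace Ω] {P : Measure Ω} {n : ℕ} (hn : 0 < n)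
    {U : ℕ → Ω → Fin n} (hU : ∀ m, Measurable (U m)) (hind : iIndepFun U P)
    (hunif : ∀ m j, P {ω | U m ω = j} = (n : ℝ≥0∞)⁻¹) (k : ℕ) (S : Finset (Fin k → Fin n)) :
    P {ω | (fun i : Fin k => U i ω) ∈ S} = ENNReal.ofReal (S.card / n ^ k) := by
  have hfiber : ∀ v : Fin k → Fin n,
      (fun ω (i : Fin k) => U i ω) ⁻¹' {v} = ⋂ i ∈ (univ : Finset (Fin k)), U i ⁻¹' {v i} := by
    intro v; ext ω; simp [funext_iff]
  have hfiber_meas : ∀ v : Fin k → Fin n,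
      MeasurableSet ((fun ω (i : Fin k) => U i ω) ⁻¹' {v}) := fun v =>
    measurable_pi_lambda (fun ω (i : Fin k) => U i ω) (fun i => hU i) (measurableSet_singleton v)
  have hfiber_eq : ∀ v : Fin k → Fin n,
      P ((fun ω (i : Fin k) => U i ω) ⁻¹' {v}) = (n : ℝ≥0∞)⁻¹ ^ k := fun v => by
    have hind' := hind.precomp (g := fun i : Fin k => (i : ℕ)) Fin.val_injective
    rw [hfiber, hind'.measure_inter_preimage_eq_mul _ fun i _ => measurableSet_singleton (v i)]
    simp only [Set.preimage, Set.mem_singleton_iff, hunif, prod_const, card_univ,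
      Fintype.card_fin]
  change P ((fun ω (i : Fin k) => U i ω) ⁻¹' S) = _
  rw [← sum_measure_preimage_singleton S fun v _ => hfiber_meas v,
    sum_congr rfl fun v _ => hfiber_eq v, sum_const, nsmul_eq_mul, div_eq_mul_inv,
    ENNReal.ofReal_mul (by positivity), ENNReal.ofReal_natCast, ← inv_pow,
    ENNReal.ofReal_pow (by positivity), ENNReal.ofReal_inv_of_pos (by positivity),
    ENNReal.ofReal_natCast]

theorem dirVec_apply {d : ℕ} (b : ℕ) (i : Fin d) :
    dirVec d b i = if b = i then 1 else if b = d + i then -1 else 0 := by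
  unfold dirVec
  split_ifs <;> omega

theorem sum_apply_add_dirVec {d : ℕ} (G : ℤ → ℝ) (y : Fin d → ℤ) (i : Fin d) :
    ∑ b : Fin (2 * d), G ((y + dirVec d b) i) =
      (2 * d - 2) * G (y i) + G (y i + 1) + G (y i - 1) := by
  have hsplit : ∀ b : ℕ, G ((y + dirVec d b) i) = G (y i) +
      ((if b = i then G (y i + 1) - G (y i) else 0) +
        (if b = d + i then G (y i - 1) - G (y i) else 0)) := fun b => by
    rw [Pi.add_apply, dirVec_apply]
    split_ifs <;> first | omega | simp [sub_eq_add_neg]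
  rw [Fin.sum_univ_eq_sum_range (fun b => G ((y + dirVec d b) i)),
    sum_congr rfl fun b _ => hsplit b, sum_add_distrib, sum_add_distrib, sum_ite_eq', sum_ite_eq', sum_const, card_range,
    if_pos (mem_range.2 (by omega)), if_pos (mem_range.2 (by omega)), nsmul_eq_mul]
  push_cast
  ring

def radialProfile (σ : ℕ → ℝ) (z : ℤ) : ℝ := 1 - ∑ s ∈ range z.natAbs, σ s

theorem radialProfile_add_one_add_sub_one (σ : ℕ → ℝ) (z : ℤ) :
    radialProfile σ (z + 1) + radialProfile σ (z - 1) = 2 * radialProfile σ z +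
      if z = 0 then -2 * σ 0 else σ (z.natAbs - 1) - σ z.natAbs := by
  rcases Int.eq_nat_or_neg z with ⟨n, rfl | rfl⟩ <;> rcases n with _ | n
  · simp [radialProfile]; ring
  · have h₁ : ((n + 1 : ℕ) + 1 : ℤ).natAbs = n + 1 + 1 := by omega
    have h₂ : ((n + 1 : ℕ) - 1 : ℤ).natAbs = n := by omega
    simp only [radialProfile, h₁, h₂, Int.natAbs_natCast, sum_range_succ,
      if_neg (show ((n + 1 : ℕ) : ℤ) ≠ 0 by omega), Nat.add_sub_cancel]
    ring
  · simp [radialProfile]; ring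
  · have h₁ : (-(n + 1 : ℕ) + 1 : ℤ).natAbs = n := by omega
    have h₂ : (-(n + 1 : ℕ) - 1 : ℤ).natAbs = n + 1 + 1 := by omega
    simp only [radialProfile, h₁, h₂, Int.natAbs_neg, Int.natAbs_natCast, sum_range_succ,
      if_neg (show -((n + 1 : ℕ) : ℤ) ≠ 0 by omega), Nat.add_sub_cancel]
    ring

/-- Decrements rising with slope `κ` and then falling with slope `κ / m` until they vanish at
`K`. -/
noncomputable def tentDecrement (κ : ℝ) (K m s : ℕ) : ℝ :=
  κ * max 0 (min ((s : ℝ) + 1) (((K : ℝ) - s) / m))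

section TentDecrement

variable {κ : ℝ} {K m : ℕ}

theorem tentDecrement_nonneg (hκ : 0 ≤ κ) (s : ℕ) : 0 ≤ tentDecrement κ K m s :=
  mul_nonneg hκ (le_max_left _ _)

theorem tentDecrement_of_le (hm : 0 < m) {s : ℕ} (hs : m * (s + 1) + s ≤ K) :
    tentDecrement κ K m s = κ * (s + 1) := by
  have hle : (s : ℝ) + 1 ≤ ((K : ℝ) - s) / m := by
    rw [le_div_iff₀ (by positivity)]
    linarith [(by exact_mod_cast hs : (m * (s + 1) + s : ℝ) ≤ K)]
  rw [tentDecrement, min_eq_left hle, max_eq_right (by positivity)]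

theorem tentDecrement_le_succ_add (hκ : 0 ≤ κ) (s : ℕ) :
    tentDecrement κ K m s ≤ tentDecrement κ K m (s + 1) + κ / m := by
  have hmin : min ((s : ℝ) + 1) (((K : ℝ) - s) / m) ≤
      min (((s + 1 : ℕ) : ℝ) + 1) (((K : ℝ) - (s + 1 : ℕ)) / m) + 1 / m := by
    rw [← min_add_add_right]
    refine min_le_min ?_ (le_of_eq ?_)
    · push_cast; linarith [(by positivity : (0 : ℝ) ≤ 1 / m)]
    · push_cast; ring
  have hmax : max 0 (min ((s : ℝ) + 1) (((K : ℝ) - s) / m)) ≤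
      max 0 (min (((s + 1 : ℕ) : ℝ) + 1) (((K : ℝ) - (s + 1 : ℕ)) / m)) + 1 / m :=
    max_le (by positivity) (hmin.trans (by gcongr; exact le_max_right _ _))
  unfold tentDecrement
  calc _ ≤ κ * (max 0 (min (((s + 1 : ℕ) : ℝ) + 1) (((K : ℝ) - (s + 1 : ℕ)) / m)) + 1 / m) :=
        mul_le_mul_of_nonneg_left hmax hκ
    _ = _ := by ring

theorem tentDecrement_le (hκ : 0 ≤ κ) (s : ℕ) : tentDecrement κ K m s ≤ κ * K / m := by
  rw [mul_div_assoc]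
  refine mul_le_mul_of_nonneg_left (max_le (by positivity) ((min_le_right _ _).trans ?_)) hκ
  gcongr
  linarith [(Nat.cast_nonneg s : (0 : ℝ) ≤ s)]

theorem tentDecrement_eq_zero {s : ℕ} (hs : K ≤ s) : tentDecrement κ K m s = 0 := by
  have : ((K : ℝ) - s) / m ≤ 0 :=
    div_nonpos_of_nonpos_of_nonneg (by linarith [(by exact_mod_cast hs : (K : ℝ) ≤ s)])
      (Nat.cast_nonneg m)
  rw [tentDecrement, max_eq_left ((min_le_right _ _).trans this), mul_zero]

theorem sum_range_tentDecrement_le (hκ : 0 ≤ κ) (t : ℕ) :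
    ∑ s ∈ range t, tentDecrement κ K m s ≤ K * (κ * K / m) := by
  calc ∑ s ∈ range t, tentDecrement κ K m s
      = ∑ s ∈ range t with s < K, tentDecrement κ K m s := by
        refine (sum_filter_of_ne fun s _ hs => ?_).symm
        by_contra hK
        exact hs (tentDecrement_eq_zero (not_lt.1 hK))
    _ ≤ ∑ s ∈ range K, tentDecrement κ K m s :=
        sum_le_sum_of_subset_of_nonneg (fun s hs => mem_range.2 (mem_filter.1 hs).2)
          fun s _ _ => tentDecrement_nonneg hκ s
    _ ≤ K * (κ * K / m) :=
        (sum_le_card_nsmul (range K) _ _ fun s _ => tentDecrement_le hκ s).trans_eq (by simp)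

end TentDecrement

theorem exists_concave_profile (R m : ℕ) (hm : 0 < m) :
    ∃ κ > 0, ∃ G : ℤ → ℝ, (∀ z, 1 / 2 ≤ G z ∧ G z ≤ 1) ∧
      (∀ z : ℤ, z.natAbs ≤ R → G (z + 1) + G (z - 1) ≤ 2 * G z - κ) ∧
      ∀ z, G (z + 1) + G (z - 1) ≤ 2 * G z + κ / m := by
  set K := R + (R + 1) * m
  have hK : (0 : ℝ) < K := by positivity
  set κ : ℝ := m / (2 * K ^ 2)
  have hκ : 0 < κ := by positivity
  set σ := tentDecrement κ K m
  have hσ0 := tentDecrement_nonneg (K := K) (m := m) hκ.le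
  have hslab : ∀ s ≤ R, σ s = κ * (s + 1) := fun s hs =>
    tentDecrement_of_le hm (by simp only [K]; nlinarith)
  refine ⟨κ, hκ, radialProfile σ, fun z => ⟨?_, ?_⟩, fun z hz => ?_, fun z => ?_⟩
  · have := sum_range_tentDecrement_le (K := K) (m := m) hκ.le z.natAbs
    have hhalf : (K : ℝ) * (κ * K / m) = 1 / 2 := by
      simp only [κ]; field_simp
    simp only [radialProfile]; linarith
  · simp only [radialProfile]
    linarith [sum_nonneg fun s (_ : s ∈ range z.natAbs) => hσ0 s]
  · rw [radialProfile_add_one_add_sub_one]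
    split_ifs with h0
    · have := hslab 0 (Nat.zero_le R)
      push_cast at this
      linarith
    · obtain ⟨n, hn⟩ := Nat.exists_eq_succ_of_ne_zero (Int.natAbs_ne_zero.2 h0)
      rw [hn, Nat.succ_sub_one, hslab n (by omega), hslab (n + 1) (by omega)]
      push_cast; linarith
  · rw [radialProfile_add_one_add_sub_one]
    split_ifs with h0
    · linarith [hσ0 0, (by positivity : 0 ≤ κ / m)]
    · obtain ⟨n, hn⟩ := Nat.exists_eq_succ_of_ne_zero (Int.natAbs_ne_zero.2 h0)
      rw [hn, Nat.succ_sub_one]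
      linarith [tentDecrement_le_succ_add (K := K) (m := m) hκ.le n]

theorem exists_drift_function {d : ℕ} (hd : 1 ≤ d) {A : Set (Fin d → ℤ)} (hA : A.Finite)
    {α : ℝ} (hα : α < 1) :
    ∃ η θ : ℝ, 0 < η ∧ 2 * η ≤ θ * (1 - α) ∧ ∃ V : (Fin d → ℤ) → ℝ,
      (∀ y, 1 / 2 ≤ V y) ∧ V 0 ≤ 1 ∧
      ∀ y, Real.exp (A.indicator (fun _ => θ) y) * ∑ b : Fin (2 * d), V (y + dirVec d b) ≤
        2 * d * Real.exp η * V y := by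
  set i₀ : Fin d := ⟨0, hd⟩
  obtain ⟨R, hR⟩ : ∃ R : ℕ, ∀ y ∈ A, (y i₀).natAbs ≤ R :=
    ⟨hA.toFinset.sup fun y => (y i₀).natAbs,
      fun y hy => le_sup (f := fun y => (y i₀).natAbs) (hA.mem_toFinset.2 hy)⟩
  have hα' : 0 < 1 - α := by linarith
  obtain ⟨m, hm⟩ := exists_nat_gt (4 / (1 - α))
  have hm₀ : 0 < m := by exact_mod_cast (by positivity : (0 : ℝ) < 4 / (1 - α)).trans hm
  rw [div_lt_iff₀ hα'] at hm
  obtain ⟨κ, hκ, G, hG, hconc, hconv⟩ := exists_concave_profile R m hm₀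
  have hd₀ : (0 : ℝ) < d := by exact_mod_cast hd
  -- `θ - η = κ / (2d)` is what the concavity of `G` buys inside the slab and `η = κ / (md)` what
  -- its convexity costs outside; `m > 4 / (1 - α)` makes the gain dominate.
  set η := κ / (m * d)
  set θ := η + κ / (2 * d)
  have hη : 0 < η := by positivity
  refine ⟨η, θ, hη, ?_, fun y => G (y i₀), fun y => (hG _).1, (hG _).2, fun y => ?_⟩
  · have : 2 * η * (m * (1 - α)) ≤ κ / (2 * d) * (1 - α) * 4 := by
      simp only [η]; field_simp; nlinarith
    nlinarith [mul_pos hη hα']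
  rw [sum_apply_add_dirVec]
  obtain ⟨hG₀, hG₁⟩ := hG (y i₀)
  by_cases hy : y ∈ A
  · rw [Set.indicator_of_mem hy]
    have hexp : 1 - κ / (2 * d) ≤ Real.exp (η - θ) := by
      linarith [Real.add_one_le_exp (η - θ), show η - θ = -(κ / (2 * d)) by ring]
    have hκd : 2 * d * (κ / (2 * d)) = κ := by field_simp
    calc _ ≤ Real.exp θ * (2 * d * Real.exp (η - θ) * G (y i₀)) := by
          refine mul_le_mul_of_nonneg_left ?_ (Real.exp_pos θ).le
          nlinarith [hconc _ (hR y hy), mul_le_mul_of_nonneg_left hexp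
            (by positivity : (0 : ℝ) ≤ 2 * d * G (y i₀))]
      _ = _ := by rw [Real.exp_sub]; field_simp
  · rw [Set.indicator_of_notMem hy, Real.exp_zero, one_mul]
    have hηd : 2 * d * η = 2 * (κ / m) := by simp only [η]; field_simp
    beta_reduce
    nlinarith [hconv (y i₀), mul_le_mul_of_nonneg_left (Real.add_one_le_exp η)
      (by positivity : (0 : ℝ) ≤ 2 * d * G (y i₀)),
      mul_le_mul_of_nonneg_left hG₀ (by positivity : (0 : ℝ) ≤ 2 * d * η)]

open Classical in
theorem local_time_in_finite_compl_large_deviation_general (d : ℕ) (hd : 1 ≤ d)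
    (D : Set (Fin d → ℤ)) (hD : Dᶜ.Finite) (α : ℝ) (hα1 : α < 1) :
    ∃ a' : ℝ, 0 < a' ∧ ∃ b' : ℝ, 0 < b' ∧
      ∀ (Ω : Type) (_ : MeasurableSpace Ω) (P : Measure Ω), IsProbabilityMeasure P →
        ∀ U : ℕ → Ω → Fin (2 * d),
          (∀ n, Measurable (U n)) →
          iIndepFun U P →
          (∀ n j, P {ω | U n ω = j} = ((2 * d : ℕ) : ℝ≥0∞)⁻¹) →
          ∀ k : ℕ, 1 ≤ k →
            P {ω | (1 - α) * k ≤
                (((Finset.range k).filter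
                    (fun j => srw d 0 (fun m => (U m ω : ℕ)) j ∈ Dᶜ)).card : ℝ)} ≤
              ENNReal.ofReal (a' * Real.exp (-b' * (k : ℝ) ^ ((1 : ℝ) / 4))) := by
  obtain ⟨η, θ, hη, hηθ, V, hV, hV0, hstep⟩ := exists_drift_function hd hD hα1
  have hθ : 0 ≤ θ := by nlinarith
  refine ⟨2, two_pos, η, hη, fun Ω _ P _ U hU hind hunif k hk => ?_⟩
  have hk' : (k : ℝ) ^ ((1 : ℝ) / 4) ≤ k :=
    Real.rpow_le_self_of_one_le (by exact_mod_cast hk) (by norm_num)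
  have hcard := card_le_of_occupationTime_ge (n := 2 * d) (by omega) 0 Dᶜ V hθ hV hV0
    (by exact_mod_cast hstep) k ((1 - α) * k)
  -- the two events differ only in the `Decidable` instances used by `filter`
  calc _ = P {ω | (1 - α) * k ≤ (occupationTime d 0 (fun m => U m ω) k Dᶜ : ℝ)} := by
        unfold occupationTime; congr!
    _ = _ := by
        rw [setOf_le_occupationTime_eq, measure_seeds_mem (by omega) hU hind hunif]
    _ ≤ ENNReal.ofReal (2 * Real.exp (η * k - θ * ((1 - α) * k))) :=
        ENNReal.ofReal_le_ofReal hcard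
    _ ≤ _ := ENNReal.ofReal_le_ofReal (by gcongr; nlinarith)

open Classical in
/-- Suppose `Dᶜ = ℤ^d \ D` is finite and let `α ∈ (0,1)`.  Then there exist
constants `a' > 0` and `b' > 0` such that for all `k ≥ 1`,
`P_o(l_k(Dᶜ) ≥ (1-α)k) ≤ a' e^{-b' k^{1/4}}`, where `l_k(Dᶜ)` is the total local time spent in
`Dᶜ` strictly before time `k` by the simple random walk started at the origin (encoded by i.i.d.
uniform seeds `U` on `(Ω, P)`). -/
theorem local_time_in_finite_compl_large_deviation (d : ℕ) (hd : 1 ≤ d)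
    (D : Set (Fin d → ℤ)) (hD : Dᶜ.Finite) (α : ℝ) (hα0 : 0 < α) (hα1 : α < 1) :
    ∃ a' : ℝ, 0 < a' ∧ ∃ b' : ℝ, 0 < b' ∧
      ∀ (Ω : Type) (_ : MeasurableSpace Ω) (P : Measure Ω), IsProbabilityMeasure P →
        ∀ U : ℕ → Ω → Fin (2 * d),
          (∀ n, Measurable (U n)) →
          iIndepFun U P →
          (∀ n j, P {ω | U n ω = j} = ((2 * d : ℕ) : ℝ≥0∞)⁻¹) →
          ∀ k : ℕ, 1 ≤ k →
            P {ω | (1 - α) * k ≤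
                (((Finset.range k).filter
                    (fun j => srw d 0 (fun m => (U m ω : ℕ)) j ∈ Dᶜ)).card : ℝ)} ≤
              ENNReal.ofReal (a' * Real.exp (-b' * (k : ℝ) ^ ((1 : ℝ) / 4))) :=
  local_time_in_finite_compl_large_deviation_general d hd D hD α hα1
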